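/- For all non-negative integers L and r with 0 \le 3r \le L and r \equiv L (mod 2), the quotient f_{L,r}(q) := (q^3;q^3)_{(L-r-2)/2} (1-q^L) / ((q^3;q^3)_r (q;q)_{(L-3r)/2}) is a polynomial in q with non-negative coefficients. -/
import Mathlib


/-- The variable `q`, as a rational function over `ℚ`. -/
noncomputable def qvar : RatFunc ℚ := RatFunc.X

/-- The q-Pochhammer symbol `(a; q)_n` for a natural number index `n`. -/
noncomputable def qp (a q : RatFunc ℚ) (n : ℕ) : RatFunc ℚ :=
  ∏ k ∈ Finset.range n, (1 - a * q ^ k)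

/-- The q-Pochhammer symbol `(a; q)_n` for an integer index `n`, with the standard
convention `(a;q)_{-n} = 1 / ∏_{k=1}^{n} (1 - a q^{-k})` for negative indices. -/
noncomputable def qpz (a q : RatFunc ℚ) (n : ℤ) : RatFunc ℚ :=
  if 0 ≤ n then ∏ k ∈ Finset.range n.toNat, (1 - a * q ^ (k : ℤ))
  else (∏ k ∈ Finset.range (-n).toNat, (1 - a * q ^ (-(k : ℤ) - 1)))⁻¹

/-- The q-binomial coefficient `[N choose k]_q`, equal to
`(q;q)_N / ((q;q)_{N-k} (q;q)_k)` when `0 ≤ k ≤ N` and `0` otherwise. -/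
noncomputable def qbin (q : RatFunc ℚ) (N k : ℤ) : RatFunc ℚ :=
  if 0 ≤ k ∧ k ≤ N then qp q q N.toNat / (qp q q (N - k).toNat * qp q q k.toNat) else 0

/-- `f` is (the image of) a polynomial in `q` with non-negative coefficients. -/
def NonnegPoly (f : RatFunc ℚ) : Prop :=
  ∃ P : Polynomial ℚ, (∀ i, 0 ≤ P.coeff i) ∧ f = algebraMap (Polynomial ℚ) (RatFunc ℚ) P

/-- Bressoud's polynomial `G(N, M; α, β, K, q)`, i.e.
`∑_{j ∈ ℤ} (-1)^j q^{K j ((α+β) j + α - β)/2} [M+N choose N - K j]_q`. The exponent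
`K j ((α+β) j + α - β) / 2` is an integer in all instances considered, and is encoded
as the numerator of the corresponding rational number. -/
noncomputable def G (q : RatFunc ℚ) (N M : ℤ) (α β : ℚ) (K : ℤ) : RatFunc ℚ :=
  ∑ᶠ j : ℤ, (-1 : RatFunc ℚ) ^ j *
    q ^ (((K : ℚ) * (j : ℚ) * ((α + β) * (j : ℚ) + α - β) / 2).num) *
    qbin q (M + N) (N - K * j)

open Polynomial

/-! ### Auxiliary polynomials -/

noncomputable def P1p (m : ℕ) : Polynomial ℚ := ∏ k ∈ Finset.range m, (1 - (X:Polynomial ℚ) ^ (k+1))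
noncomputable def P3p (m : ℕ) : Polynomial ℚ := ∏ k ∈ Finset.range m, (1 - (X:Polynomial ℚ) ^ (3*k+3))
noncomputable def Tp (m : ℕ) : Polynomial ℚ := ∏ k ∈ Finset.range m, (1 + (X:Polynomial ℚ) ^ (k+1) + (X:Polynomial ℚ) ^ (2*k+2))
noncomputable def gb : ℕ → ℕ → Polynomial ℚ
  | _, 0 => 1
  | 0, _+1 => 0
  | (N+1), (k+1) => gb N k + (X:Polynomial ℚ) ^ (3*k+3) * gb N (k+1)

lemma P3p_succ (m : ℕ) : P3p (m+1) = P3p m * (1 - (X:Polynomial ℚ)^(3*m+3)) := Finset.prod_range_succ _ _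
lemma P1p_succ (m : ℕ) : P1p (m+1) = P1p m * (1 - (X:Polynomial ℚ)^(m+1)) := Finset.prod_range_succ _ _
lemma Tp_succ (m : ℕ) : Tp (m+1) = Tp m * (1 + (X:Polynomial ℚ)^(m+1) + (X:Polynomial ℚ)^(2*m+2)) := Finset.prod_range_succ _ _

lemma Tp_mul_P1p : ∀ m, Tp m * P1p m = P3p m := by
  intro m
  induction m with
  | zero => simp [Tp, P1p, P3p]
  | succ k ih =>
    rw [Tp_succ, P1p_succ, P3p_succ, ← ih]
    have h2 : (X:Polynomial ℚ)^(2*k+2) = ((X:Polynomial ℚ)^(k+1))^2 := by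
      rw [← pow_mul, show (k+1)*2 = 2*k+2 from by omega]
    have h3 : (X:Polynomial ℚ)^(3*k+3) = ((X:Polynomial ℚ)^(k+1))^3 := by
      rw [← pow_mul, show (k+1)*3 = 3*k+3 from by omega]
    rw [h2, h3]; ring

lemma gb_big : ∀ N k, N < k → gb N k = 0 := by
  intro N
  induction N with
  | zero =>
    intro k hk
    cases k with
    | zero => omega
    | succ k => rfl
  | succ M ih =>
    intro k hk
    cases k with
    | zero => omega
    | succ k =>
      show gb M k + _ * gb M (k+1) = 0
      rw [ih k (by omega), ih (k+1) (by omega)]; ring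

lemma gb_mul : ∀ N k, k ≤ N → gb N k * (P3p k * P3p (N-k)) = P3p N := by
  intro N
  induction N with
  | zero => intro k hk; interval_cases k; simp [gb, P3p]
  | succ M ih =>
    intro k hk
    cases k with
    | zero => show 1 * (P3p 0 * P3p (M+1)) = P3p (M+1); simp [P3p]
    | succ k =>
      show (gb M k + (X:Polynomial ℚ)^(3*k+3) * gb M (k+1)) * (P3p (k+1) * P3p (M+1-(k+1))) = P3p (M+1)
      rcases Nat.lt_or_ge k M with hkM | hkM
      · have h1 := ih k (by omega)
        have h2 := ih (k+1) (by omega)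
        rw [show M - k = (M - (k+1)) + 1 from by omega, P3p_succ (M - (k+1))] at h1
        rw [show M + 1 - (k+1) = (M - (k+1)) + 1 from by omega, P3p_succ (M - (k+1)),
          P3p_succ k, P3p_succ M]
        rw [P3p_succ k] at h2
        have hx : (X:Polynomial ℚ)^(3*k+3) * (X:Polynomial ℚ)^(3*(M-(k+1))+3) = (X:Polynomial ℚ)^(3*M+3) := by
          rw [← pow_add]; congr 1; omega
        linear_combination (1 - (X:Polynomial ℚ)^(3*k+3)) * h1 +
          (X:Polynomial ℚ)^(3*k+3) * (1 - (X:Polynomial ℚ)^(3*(M-(k+1))+3)) * h2 - P3p M * hx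
      · have hk' : k = M := by omega
        subst hk'
        rw [gb_big k (k+1) (by omega)]
        have h1 := ih k le_rfl
        simp only [Nat.sub_self] at h1 ⊢
        rw [P3p_succ]
        have hP0 : P3p 0 = 1 := by simp [P3p]
        rw [hP0] at h1 ⊢
        linear_combination (1 - (X:Polynomial ℚ)^(3*k+3)) * h1

/-! ### Non-negativity -/

def NN (p : Polynomial ℚ) : Prop := ∀ i, 0 ≤ p.coeff i

lemma NN.add {p q : Polynomial ℚ} (hp : NN p) (hq : NN q) : NN (p + q) := by
  intro i; rw [coeff_add]; exact add_nonneg (hp i) (hq i)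
lemma NN.mul {p q : Polynomial ℚ} (hp : NN p) (hq : NN q) : NN (p * q) := by
  intro i; rw [coeff_mul]
  exact Finset.sum_nonneg fun x _ => mul_nonneg (hp x.1) (hq x.2)
lemma NN.one : NN (1 : Polynomial ℚ) := by
  intro i; rw [coeff_one]; split <;> norm_num
lemma NN.zero : NN (0 : Polynomial ℚ) := by intro i; simp
lemma NN.X_pow (a : ℕ) : NN ((X:Polynomial ℚ) ^ a) := by
  intro i; rw [coeff_X_pow]; split <;> norm_num

lemma nn_Tp (m : ℕ) : NN (Tp m) := by
  induction m with
  | zero => simp only [Tp, Finset.range_zero, Finset.prod_empty]; exact NN.one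
  | succ k ih =>
    rw [Tp_succ]
    exact ih.mul ((NN.one.add (NN.X_pow _)).add (NN.X_pow _))

lemma nn_gb : ∀ N k, NN (gb N k) := by
  intro N
  induction N with
  | zero =>
    intro k
    cases k with
    | zero => exact NN.one
    | succ k => exact NN.zero
  | succ M ih =>
    intro k
    cases k with
    | zero => exact NN.one
    | succ k => exact (ih k).add ((NN.X_pow _).mul (ih (k+1)))

/-! ### Bridges to `RatFunc` -/

lemma qp3_eq (r : ℕ) : qp (qvar^3) (qvar^3) r = algebraMap (Polynomial ℚ) (RatFunc ℚ) (P3p r) := by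
  rw [qp, P3p, map_prod]
  refine Finset.prod_congr rfl fun k _ => ?_
  rw [map_sub, map_one, map_pow, RatFunc.algebraMap_X]
  show _ = 1 - RatFunc.X ^ (3*k+3)
  rw [show 3*k+3 = 3 + 3*k from by omega, pow_add, pow_mul]
  rfl

lemma qp1_eq (n : ℕ) : qp qvar qvar n = algebraMap (Polynomial ℚ) (RatFunc ℚ) (P1p n) := by
  rw [qp, P1p, map_prod]
  refine Finset.prod_congr rfl fun k _ => ?_
  rw [map_sub, map_one, map_pow, RatFunc.algebraMap_X]
  show (1:RatFunc ℚ) - qvar * qvar ^ k = 1 - RatFunc.X ^ (k+1)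
  rw [show k+1 = 1+k from by omega, pow_add, pow_one]
  rfl

lemma qpz3_eq (m : ℕ) : qpz (qvar^3) (qvar^3) (m : ℤ) = algebraMap (Polynomial ℚ) (RatFunc ℚ) (P3p m) := by
  rw [qpz, if_pos (by positivity), Int.toNat_natCast, ← qp3_eq, qp]
  refine Finset.prod_congr rfl fun k _ => ?_
  rw [zpow_natCast]

lemma one_sub_X_pow_ne_zero (a : ℕ) : (1 - (X:Polynomial ℚ)^(a+1)) ≠ 0 := by
  intro h
  have := congrArg (fun p => Polynomial.coeff p 0) h
  simp [coeff_one, coeff_X_pow] at this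

lemma P3p_ne_zero (m : ℕ) : P3p m ≠ 0 := by
  rw [P3p]
  exact Finset.prod_ne_zero_iff.mpr fun k _ => by
    have := one_sub_X_pow_ne_zero (3*k+2)
    rwa [show 3*k+2+1 = 3*k+3 from rfl] at this

lemma P1p_ne_zero (m : ℕ) : P1p m ≠ 0 := by
  rw [P1p]
  exact Finset.prod_ne_zero_iff.mpr fun k _ => one_sub_X_pow_ne_zero k

/-! ### Key identities -/

lemma ring_key {R : Type*} [CommRing R] (P3N P3t P3s P3s1 P1s T1 T2 g1 g2 x y : R)
    (hH1 : g1 * ((P3t * (1 - y)) * P3s) = P3N)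
    (hH2 : g2 * (P3t * P3s1) = P3N)
    (hT1 : T1 * P1s = P3s)
    (hT2 : T2 * (P1s * (1 - x)) = P3s1) :
    (g1 * T1 * (1 + x) + x * x * g2 * T2) * ((P3t * (1 - y)) * (P1s * (1 - x)))
      = P3N * (1 - x * x * y) := by
  linear_combination (g1 * (1+x) * (1-x) * (P3t * (1-y))) * hT1 + (1 - x*x) * hH1 +
    (x*x * g2 * (1-y) * P3t) * hT2 + (x*x*(1-y)) * hH2

lemma key (s t : ℕ) :
    P3p (s+t+1) * (1 - (X:Polynomial ℚ)^(2*s+3*t+5)) =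
      (gb (s+t+1) (t+1) * Tp s * (1+(X:Polynomial ℚ)^(s+1)) +
        (X:Polynomial ℚ)^(2*s+2) * gb (s+t+1) t * Tp (s+1)) * (P3p (t+1) * P1p (s+1)) := by
  have hH1 := gb_mul (s+t+1) (t+1) (by omega)
  have hH2 := gb_mul (s+t+1) t (by omega)
  rw [show s+t+1-(t+1) = s from by omega, P3p_succ t] at hH1
  rw [show s+t+1-t = s+1 from by omega] at hH2
  have hT1 := Tp_mul_P1p s
  have hT2 := Tp_mul_P1p (s+1)
  rw [P1p_succ s] at hT2
  have h := ring_key (P3p (s+t+1)) (P3p t) (P3p s) (P3p (s+1)) (P1p s) (Tp s) (Tp (s+1))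
    (gb (s+t+1) (t+1)) (gb (s+t+1) t) ((X:Polynomial ℚ)^(s+1)) ((X:Polynomial ℚ)^(3*t+3))
    hH1 hH2 hT1 hT2
  rw [P3p_succ t, P1p_succ s]
  rw [show ((X:Polynomial ℚ)^(2*s+2)) = (X:Polynomial ℚ)^(s+1) * (X:Polynomial ℚ)^(s+1) from by
    rw [← pow_add]; congr 1; omega]
  rw [show ((X:Polynomial ℚ)^(2*s+3*t+5)) =
      (X:Polynomial ℚ)^(s+1) * (X:Polynomial ℚ)^(s+1) * (X:Polynomial ℚ)^(3*t+3) from by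
    rw [← pow_add, ← pow_add]; congr 1; omega]
  exact h.symm

lemma key0 (s : ℕ) :
    P3p s * (1 - (X:Polynomial ℚ)^(2*s+2)) =
      (Tp s * (1+(X:Polynomial ℚ)^(s+1))) * (P3p 0 * P1p (s+1)) := by
  have hT1 := Tp_mul_P1p s
  rw [show (P3p 0 : Polynomial ℚ) = 1 from by simp [P3p], P1p_succ s]
  rw [show ((X:Polynomial ℚ)^(2*s+2)) = (X:Polynomial ℚ)^(s+1) * (X:Polynomial ℚ)^(s+1) from by
    rw [← pow_add]; congr 1; omega]
  linear_combination (-(1+(X:Polynomial ℚ)^(s+1))*(1-(X:Polynomial ℚ)^(s+1))) * hT1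

lemma keyn0 (t : ℕ) :
    P3p t * (1 - (X:Polynomial ℚ)^(3*t+3)) = 1 * (P3p (t+1) * P1p 0) := by
  rw [show (P1p 0 : Polynomial ℚ) = 1 from by simp [P1p], P3p_succ t]
  ring

/-! ### Main theorem -/

theorem stmt_18 (L r : ℕ) (h1 : 3 * r ≤ L) (h2 : r % 2 = L % 2) :
    NonnegPoly (qpz (qvar ^ 3) (qvar ^ 3) (((L : ℤ) - r - 2) / 2) * (1 - qvar ^ L) /
      (qp (qvar ^ 3) (qvar ^ 3) r * qp qvar qvar ((L - 3 * r) / 2))) := by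
  by_cases hL : L = 0
  · subst hL
    refine ⟨0, fun i => by simp, ?_⟩
    simp
  · have hL' : 0 < L := Nat.pos_of_ne_zero hL
    -- get n with L = 3r + 2n
    have hn2 : (L - 3*r) % 2 = 0 := by omega
    obtain ⟨n, hLn⟩ : ∃ n, L = 3*r + 2*n := ⟨(L - 3*r)/2, by omega⟩
    have hdiv : (L - 3*r)/2 = n := by omega
    rw [hdiv]
    -- the algebraic form of the statement
    have hq : (1 - qvar ^ L) = algebraMap (Polynomial ℚ) (RatFunc ℚ) (1 - X^L) := by
      rw [map_sub, map_one, map_pow, RatFunc.algebraMap_X]; rfl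
    have habs : ∀ m Q : _, NN Q →
        (P3p m * (1 - (X:Polynomial ℚ)^L) = Q * (P3p r * P1p n)) →
        ((L:ℤ) - r - 2)/2 = ((m : ℕ) : ℤ) →
        NonnegPoly (qpz (qvar ^ 3) (qvar ^ 3) (((L : ℤ) - r - 2) / 2) * (1 - qvar ^ L) /
          (qp (qvar ^ 3) (qvar ^ 3) r * qp qvar qvar n)) := by
      intro m Q hQ hkey hidx
      refine ⟨Q, hQ, ?_⟩
      rw [hidx, qpz3_eq, qp3_eq, qp1_eq, hq, ← map_mul, ← map_mul]
      have hden : algebraMap (Polynomial ℚ) (RatFunc ℚ) (P3p r * P1p n) ≠ 0 := by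
        rw [ne_eq, map_eq_zero_iff _ (RatFunc.algebraMap_injective ℚ)]
        exact mul_ne_zero (P3p_ne_zero r) (P1p_ne_zero n)
      rw [div_eq_iff hden, ← map_mul]
      exact congrArg _ hkey
    cases n with
    | zero =>
      -- L = 3r, r ≥ 1
      obtain ⟨t, rfl⟩ : ∃ t, r = t + 1 := ⟨r - 1, by omega⟩
      refine habs t 1 NN.one ?_ (by omega)
      have := keyn0 t
      rw [show 3*t+3 = L from by omega] at this
      exact this
    | succ s =>
      cases r with
      | zero =>
        refine habs s (Tp s * (1+(X:Polynomial ℚ)^(s+1)))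
          ((nn_Tp s).mul (NN.one.add (NN.X_pow _))) ?_ (by omega)
        have := key0 s
        rwa [show 2*s+2 = L from by omega] at this
      | succ t =>
        refine habs (s+t+1)
          (gb (s+t+1) (t+1) * Tp s * (1+(X:Polynomial ℚ)^(s+1)) +
            (X:Polynomial ℚ)^(2*s+2) * gb (s+t+1) t * Tp (s+1))
          ((((nn_gb _ _).mul (nn_Tp s)).mul (NN.one.add (NN.X_pow _))).add
            (((NN.X_pow _).mul (nn_gb _ _)).mul (nn_Tp (s+1)))) ?_ (by omega)
        have := key s t
        rwa [show 2*s+3*t+5 = L from by omega] at this
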